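/- Sign and monotonicity of generalized Mayer coefficients (used in the proof of Theorem 4.4). Let H = (h_e)_{e∈E} be a central essential hyperplane arrangement in ℝ^n, d ≥ 0 an integer, and let Λ ⊆ Λ′ ⊆ ℝ^d be Borel sets. Then 0 ≤ (−1)^n Σ_{S ⊆ E spanning} ∫_{Λ^n} ∏_{e∈S} (−𝟙[‖h_e(x)‖₂ ≤ 1]) dx ≤ (−1)^n Σ_{S ⊆ E spanning} ∫_{(Λ′)^n} ∏_{e∈S} (−𝟙[‖h_e(x)‖₂ ≤ 1]) dx, where Λ^n := {x ∈ (ℝ^d)^n : x_i ∈ Λ for all i}. In particular the generalized Mayer coefficient Σ_{S spanning} ∫_{(ℝ^d)^n} ∏_{e∈S} (−𝟙[‖h_e(x)‖₂ ≤ 1]) dx has sign (−1)^n. -/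

import Mathlib

open MeasureTheory
open scoped ENNReal

noncomputable section

/-- Action of a linear functional with coefficient vector `a : Fin n → ℝ` on a
configuration of `n` points in a real vector space `V`:  `x ↦ ∑ i, a i • x i`. -/
def funcApp {n : ℕ} {V : Type*} [AddCommGroup V] [Module ℝ V]
    (a : Fin n → ℝ) (x : Fin n → V) : V := ∑ i, a i • x i

/-- `S ⊆ E` is spanning for the arrangement with coefficient vectors `a`:
the functionals `{h_e : e ∈ S}` span the dual of `ℝ^n` (identified with `ℝ^n`). -/
def IsSpanning {E : Type*} {n : ℕ} (a : E → Fin n → ℝ) (S : Finset E) : Prop :=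
  Submodule.span ℝ (a '' ↑S) = (⊤ : Submodule ℝ (Fin n → ℝ))

/-- A base is a spanning set of cardinality `n`. -/
def IsBase {E : Type*} {n : ℕ} (a : E → Fin n → ℝ) (S : Finset E) : Prop :=
  IsSpanning a S ∧ S.card = n

/-- The surface measure on the unit sphere of `ℝ^m`: the `(m-1)`-dimensional
Hausdorff measure restricted to the unit sphere. -/
def sphMeas (m : ℕ) : Measure (EuclideanSpace ℝ (Fin m)) :=
  (μH[(m : ℝ) - 1]).restrict (Metric.sphere 0 1)

/-- The space of `m`-dimensional `H`-polymers of type `S` (unit radii). -/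
def polymerBody {E : Type*} {n : ℕ} (m : ℕ) (a : E → Fin n → ℝ) (S : Finset E) :
    Set (Fin n → EuclideanSpace ℝ (Fin m)) :=
  {x | (∀ e ∈ S, ‖funcApp (a e) x‖ = 1) ∧ ∀ e ∉ S, 1 < ‖funcApp (a e) x‖}

/-- The map `Φ_S : x ↦ (h_e(x))_{e ∈ S}`. -/
def PhiMap {E : Type*} {n : ℕ} (m : ℕ) (a : E → Fin n → ℝ) (S : Finset E)
    (x : Fin n → EuclideanSpace ℝ (Fin m)) : ↥S → EuclideanSpace ℝ (Fin m) :=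
  fun e => funcApp (a e) x

/-- `vol(P^S(m)) := σ_m^{⊗S}(Φ_S(P^S(m)))`. -/
def polymerVol {E : Type*} {n : ℕ} (m : ℕ) (a : E → Fin n → ℝ) (S : Finset E) : ℝ≥0∞ :=
  Measure.pi (fun _ : ↥S => sphMeas m) (PhiMap m a S '' polymerBody m a S)

open scoped Classical in
/-- `vol(P_H(m))`: total volume of the space of `m`-dimensional `H`-polymers. -/
def polymerVolTotal {E : Type*} [Fintype E] {n : ℕ} (m : ℕ) (a : E → Fin n → ℝ) : ℝ≥0∞ :=
  ∑ S ∈ Finset.univ.filter (IsBase a), polymerVol m a S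

open scoped Classical in
/-- The integrand `Σ_{S spanning} ∏_{e∈S} (−𝟙[‖h_e(x)‖ ≤ 1])`. -/
def mayerIntegrand {E : Type*} [Fintype E] {n : ℕ} (d : ℕ) (a : E → Fin n → ℝ)
    (x : Fin n → EuclideanSpace ℝ (Fin d)) : ℝ :=
  ∑ S ∈ Finset.univ.filter (IsSpanning a),
    ∏ e ∈ S, (if ‖funcApp (a e) x‖ ≤ 1 then (-1 : ℝ) else 0)

/-!
At a configuration `x`, put `T = {e | ‖h_e(x)‖ ≤ 1}`; the integrand is then
`χ(T) = ∑_{S ⊆ T spanning} (-1)^|S|`, a quantity attached to any finite family of vectors.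
It obeys deletion–contraction, `χ(T ∪ {e}) = χ(T) - χ(T / e)`, where `T / e` is the family
pushed to the quotient by the line through `h_e`: contracting a nonzero vector lowers the rank
by one, and a zero vector makes `χ` vanish. By induction `(-1)^rank · χ ≥ 0`, so `(-1)^n` times
the integrand is pointwise nonnegative. Each spanning summand is the indicator of a compact set,
since `x ↦ (h_e(x))_{e ∈ S}` is injective, so everything is integrable and the integral of a
nonnegative function grows with the domain.
-/

open Finset Module Submodule
open scoped Classical

section SpanningSignSum

variable {E M : Type*} [AddCommGroup M] [Module ℝ M]

def spanningSignSum (v : E → M) (T : Finset E) : ℝ :=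
  ∑ S ∈ T.powerset, if span ℝ (v '' S) = ⊤ then (-1) ^ #S else 0

theorem span_image_mkQ_eq_top_iff (N : Submodule ℝ M) (s : Set M) :
    span ℝ (N.mkQ '' s) = ⊤ ↔ N ⊔ span ℝ s = ⊤ := by
  rw [← map_span, map_mkQ_eq_top]

theorem spanningSignSum_insert {v : E → M} {T : Finset E} {e : E} (he : e ∉ T) :
    spanningSignSum v (insert e T) =
      spanningSignSum v T - spanningSignSum ((ℝ ∙ v e).mkQ ∘ v) T := by
  rw [spanningSignSum, sum_powerset_insert he, spanningSignSum, spanningSignSum,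
    sub_eq_add_neg, ← sum_neg_distrib]
  congr 1
  refine sum_congr rfl fun S hS => ?_
  have heS : e ∉ S := fun h => he (mem_powerset.mp hS h)
  simp only [coe_insert, Set.image_insert_eq, span_insert, Set.image_comp,
    span_image_mkQ_eq_top_iff, card_insert_of_notMem heS, pow_succ]
  split_ifs <;> ring

theorem spanningSignSum_insert_of_eq_zero {v : E → M} {T : Finset E} {e : E} (he : e ∉ T)
    (hv : v e = 0) : spanningSignSum v (insert e T) = 0 := by
  rw [spanningSignSum_insert he, sub_eq_zero, spanningSignSum, spanningSignSum]
  refine sum_congr rfl fun S _ => ?_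
  simp only [Set.image_comp, span_image_mkQ_eq_top_iff, span_singleton_eq_bot.mpr hv, bot_sup_eq]

theorem spanningSignSum_empty (v : E → M) :
    spanningSignSum v (∅ : Finset E) = if (⊥ : Submodule ℝ M) = ⊤ then 1 else 0 := by
  simp [spanningSignSum]

theorem neg_one_pow_finrank_mul_spanningSignSum_nonneg [FiniteDimensional ℝ M]
    (v : E → M) (T : Finset E) : 0 ≤ (-1) ^ finrank ℝ M * spanningSignSum v T := by
  induction T using Finset.induction_on generalizing M with
  | empty =>
    rw [spanningSignSum_empty v]
    split_ifs with h
    · rw [← finrank_top, ← h, finrank_bot, pow_zero, one_mul]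
      exact zero_le_one
    · simp
  | insert e T he ih =>
    by_cases hv : v e = 0
    · simp [spanningSignSum_insert_of_eq_zero he hv]
    have hrank : finrank ℝ M = finrank ℝ (M ⧸ ℝ ∙ v e) + 1 := by
      rw [← (ℝ ∙ v e).finrank_quotient_add_finrank, finrank_span_singleton hv]
    have hdel := ih v
    have hcon := ih ((ℝ ∙ v e).mkQ ∘ v)
    rw [hrank, pow_succ] at hdel
    rw [spanningSignSum_insert he, hrank, pow_succ]
    linarith

theorem sum_spanning_prod_ite_eq_spanningSignSum [Fintype E] (v : E → M) (p : E → Prop) :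
    ∑ S ∈ univ.filter (fun S : Finset E => span ℝ (v '' S) = ⊤),
        ∏ e ∈ S, (if p e then (-1 : ℝ) else 0) =
      spanningSignSum v (univ.filter p) := by
  have hpow : (univ.filter p).powerset = univ.filter fun S => ∀ e ∈ S, p e := by
    ext S
    simp [subset_iff]
  simp only [prod_ite_zero, prod_const, spanningSignSum, hpow, sum_filter, ← ite_and, and_comm]

end SpanningSignSum

section Configurations

variable {E V : Type*} {n : ℕ}

@[simps]
def funcAppLinear [AddCommGroup V] [Module ℝ V] (c : Fin n → ℝ) : (Fin n → V) →ₗ[ℝ] V where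
  toFun := funcApp c
  map_add' x y := by simp [funcApp, sum_add_distrib]
  map_smul' r x := by simp [funcApp, smul_sum, smul_comm r]

theorem eq_zero_of_funcApp_eq_zero [AddCommGroup V] [Module ℝ V] {a : E → Fin n → ℝ}
    {S : Finset E} (hS : IsSpanning a S) {x : Fin n → V}
    (hx : ∀ e ∈ S, funcApp (a e) x = 0) : x = 0 := by
  have hzero : Fintype.linearCombination ℝ x = 0 :=
    LinearMap.ext_on hS <| by
      rintro _ ⟨e, he, rfl⟩
      simpa [funcApp, Fintype.linearCombination_apply] using hx e he
  funext j
  simpa using LinearMap.congr_fun hzero (Pi.single j 1)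

theorem isCompact_setOf_forall_norm_funcApp_le [NormedAddCommGroup V] [NormedSpace ℝ V]
    [FiniteDimensional ℝ V] {a : E → Fin n → ℝ} {S : Finset E} (hS : IsSpanning a S) (r : ℝ) :
    IsCompact {x : Fin n → V | ∀ e ∈ S, ‖funcApp (a e) x‖ ≤ r} := by
  let L : (Fin n → V) →ₗ[ℝ] (S → V) := LinearMap.pi fun e => funcAppLinear (a e)
  have hL : Topology.IsClosedEmbedding L :=
    L.isClosedEmbedding_of_injective <| LinearMap.ker_eq_bot'.mpr fun x hx =>
      eq_zero_of_funcApp_eq_zero hS fun e he => congr_fun hx ⟨e, he⟩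
  convert hL.isCompact_preimage (isCompact_univ_pi fun _ => isCompact_closedBall (0 : V) r)
  ext x
  simp [L]

theorem integrable_prod_ite_norm_funcApp_le [NormedAddCommGroup V] [NormedSpace ℝ V]
    [FiniteDimensional ℝ V] [MeasurableSpace V] [BorelSpace V]
    (μ : Measure (Fin n → V)) [IsFiniteMeasureOnCompacts μ]
    {a : E → Fin n → ℝ} {S : Finset E} (hS : IsSpanning a S) :
    Integrable (fun x => ∏ e ∈ S, if ‖funcApp (a e) x‖ ≤ 1 then (-1 : ℝ) else 0) μ := by
  have hK := isCompact_setOf_forall_norm_funcApp_le (V := V) hS 1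
  have hind : (fun x : Fin n → V => ∏ e ∈ S, if ‖funcApp (a e) x‖ ≤ 1 then (-1 : ℝ) else 0) =
      Set.indicator {x | ∀ e ∈ S, ‖funcApp (a e) x‖ ≤ 1} fun _ => (-1) ^ #S := by
    ext x
    simp [prod_ite_zero, Set.indicator_apply]
  rw [hind]
  exact (integrable_indicator_iff hK.measurableSet).2 (integrableOn_const hK.measure_lt_top.ne)

end Configurations

section MayerIntegrand

variable {E : Type*} [Fintype E] {n d : ℕ} (a : E → Fin n → ℝ)

theorem mayerIntegrand_eq_spanningSignSum (x : Fin n → EuclideanSpace ℝ (Fin d)) :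
    mayerIntegrand d a x = spanningSignSum a (univ.filter fun e => ‖funcApp (a e) x‖ ≤ 1) :=
  sum_spanning_prod_ite_eq_spanningSignSum a _

theorem neg_one_pow_mul_mayerIntegrand_nonneg (x : Fin n → EuclideanSpace ℝ (Fin d)) :
    0 ≤ (-1) ^ n * mayerIntegrand d a x := by
  simpa [mayerIntegrand_eq_spanningSignSum] using
    neg_one_pow_finrank_mul_spanningSignSum_nonneg a (univ.filter fun e => ‖funcApp (a e) x‖ ≤ 1)

variable (μ : Measure (Fin n → EuclideanSpace ℝ (Fin d)))

theorem integrable_mayerIntegrand [IsFiniteMeasureOnCompacts μ] :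
    Integrable (mayerIntegrand d a) μ :=
  integrable_finsetSum _ fun _ hS => integrable_prod_ite_norm_funcApp_le μ (mem_filter.mp hS).2

theorem sum_integral_eq_integral_mayerIntegrand [IsFiniteMeasureOnCompacts μ] :
    ∑ S ∈ univ.filter (IsSpanning a),
        ∫ x, (∏ e ∈ S, if ‖funcApp (a e) x‖ ≤ 1 then (-1 : ℝ) else 0) ∂μ =
      ∫ x, mayerIntegrand d a x ∂μ :=
  (integral_finsetSum _ fun _ hS =>
    integrable_prod_ite_norm_funcApp_le μ (mem_filter.mp hS).2).symm

theorem neg_one_pow_mul_integral_mayerIntegrand_nonneg :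
    0 ≤ (-1) ^ n * ∫ x, mayerIntegrand d a x ∂μ := by
  rw [← integral_const_mul]
  exact integral_nonneg (neg_one_pow_mul_mayerIntegrand_nonneg a)

theorem neg_one_pow_mul_setIntegral_mayerIntegrand_mono [IsFiniteMeasureOnCompacts μ]
    {s t : Set (Fin n → EuclideanSpace ℝ (Fin d))} (hst : s ⊆ t) :
    (-1) ^ n * ∫ x in s, mayerIntegrand d a x ∂μ ≤
      (-1) ^ n * ∫ x in t, mayerIntegrand d a x ∂μ := by
  rw [← integral_const_mul, ← integral_const_mul]
  exact setIntegral_mono_set ((integrable_mayerIntegrand a μ).const_mul _).integrableOn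
    (.of_forall (neg_one_pow_mul_mayerIntegrand_nonneg a)) hst.eventuallyLE

end MayerIntegrand

open scoped Classical in
theorem mayer_coefficient_sign_and_monotone_general
    {n : ℕ} {E : Type*} [Fintype E] (a : E → Fin n → ℝ)
    (d : ℕ) (Λ Λ' : Set (EuclideanSpace ℝ (Fin d)))
    (hsub : Λ ⊆ Λ') :
    (0 ≤ (-1 : ℝ) ^ n *
        ∑ S ∈ Finset.univ.filter (IsSpanning a),
          ∫ x in {x : Fin n → EuclideanSpace ℝ (Fin d) | ∀ i, x i ∈ Λ},
            ∏ e ∈ S, (if ‖funcApp (a e) x‖ ≤ 1 then (-1 : ℝ) else 0))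
    ∧ ((-1 : ℝ) ^ n *
        ∑ S ∈ Finset.univ.filter (IsSpanning a),
          ∫ x in {x : Fin n → EuclideanSpace ℝ (Fin d) | ∀ i, x i ∈ Λ},
            ∏ e ∈ S, (if ‖funcApp (a e) x‖ ≤ 1 then (-1 : ℝ) else 0)
        ≤ (-1 : ℝ) ^ n *
        ∑ S ∈ Finset.univ.filter (IsSpanning a),
          ∫ x in {x : Fin n → EuclideanSpace ℝ (Fin d) | ∀ i, x i ∈ Λ'},
            ∏ e ∈ S, (if ‖funcApp (a e) x‖ ≤ 1 then (-1 : ℝ) else 0))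
    ∧ 0 ≤ (-1 : ℝ) ^ n *
        ∑ S ∈ Finset.univ.filter (IsSpanning a),
          ∫ x : Fin n → EuclideanSpace ℝ (Fin d),
            ∏ e ∈ S, (if ‖funcApp (a e) x‖ ≤ 1 then (-1 : ℝ) else 0) := by
  simp only [sum_integral_eq_integral_mayerIntegrand]
  exact ⟨neg_one_pow_mul_integral_mayerIntegrand_nonneg a _,
    neg_one_pow_mul_setIntegral_mayerIntegrand_mono a volume fun x hx i => hsub (hx i),
    neg_one_pow_mul_integral_mayerIntegrand_nonneg a _⟩

open scoped Classical in
/-- **Sign and monotonicity of generalized Mayer coefficients.** -/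
theorem mayer_coefficient_sign_and_monotone
    {n : ℕ} (hn : 1 ≤ n) {E : Type*} [Fintype E] (a : E → Fin n → ℝ)
    (hnz : ∀ e, a e ≠ 0)
    (hess : Submodule.span ℝ (Set.range a) = (⊤ : Submodule ℝ (Fin n → ℝ)))
    (d : ℕ) (Λ Λ' : Set (EuclideanSpace ℝ (Fin d)))
    (hΛ : MeasurableSet Λ) (hΛ' : MeasurableSet Λ') (hsub : Λ ⊆ Λ') :
    (0 ≤ (-1 : ℝ) ^ n *
        ∑ S ∈ Finset.univ.filter (IsSpanning a),
          ∫ x in {x : Fin n → EuclideanSpace ℝ (Fin d) | ∀ i, x i ∈ Λ},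
            ∏ e ∈ S, (if ‖funcApp (a e) x‖ ≤ 1 then (-1 : ℝ) else 0))
    ∧ ((-1 : ℝ) ^ n *
        ∑ S ∈ Finset.univ.filter (IsSpanning a),
          ∫ x in {x : Fin n → EuclideanSpace ℝ (Fin d) | ∀ i, x i ∈ Λ},
            ∏ e ∈ S, (if ‖funcApp (a e) x‖ ≤ 1 then (-1 : ℝ) else 0)
        ≤ (-1 : ℝ) ^ n *
        ∑ S ∈ Finset.univ.filter (IsSpanning a),
          ∫ x in {x : Fin n → EuclideanSpace ℝ (Fin d) | ∀ i, x i ∈ Λ'},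
            ∏ e ∈ S, (if ‖funcApp (a e) x‖ ≤ 1 then (-1 : ℝ) else 0))
    ∧ 0 ≤ (-1 : ℝ) ^ n *
        ∑ S ∈ Finset.univ.filter (IsSpanning a),
          ∫ x : Fin n → EuclideanSpace ℝ (Fin d),
            ∏ e ∈ S, (if ‖funcApp (a e) x‖ ≤ 1 then (-1 : ℝ) else 0) :=
  mayer_coefficient_sign_and_monotone_general a d Λ Λ' hsub
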